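/- Let R be a ring with 1 and let (L, l) be any localization on the category of abelian groups. Then the endofunctor M ↦ R ⊗_ℤ M of the category of abelian groups preserves L-equivalences: if f : X → Y is an L-equivalence of abelian groups, then R ⊗_ℤ f : R ⊗_ℤ X → R ⊗_ℤ Y is an L-equivalence. -/

import Mathlib

open CategoryTheory

/-- A localization (reflection) on a category `C`: a functor `L : C ⥤ C` with a natural
transformation `l : 𝟭 C ⟶ L` such that `L (l X) = l (L X)` and these morphisms are
isomorphisms. -/
structure LocalizationData (C : Type*) [Category C] where
  /-- the localization functor -/
  L : C ⥤ C
  /-- the unit -/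
  l : 𝟭 C ⟶ L
  coincide : ∀ X : C, L.map (l.app X) = l.app (L.obj X)
  isIso : ∀ X : C, IsIso (L.map (l.app X))

/-- An object `X` is `L`-local if `l X : X ⟶ L X` is an isomorphism. -/
def LocalizationData.IsLocal {C : Type*} [Category C] (Λ : LocalizationData C) (X : C) : Prop :=
  IsIso (Λ.l.app X)

/-- A morphism `g` is an `L`-equivalence if `L g` is an isomorphism. -/
def LocalizationData.IsEquiv {C : Type*} [Category C] (Λ : LocalizationData C)
    {X Y : C} (g : X ⟶ Y) : Prop :=
  IsIso (Λ.L.map g)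

/-- The endofunctor `M ↦ R ⊗_ℤ M` on the category of abelian groups, for a ring `R`. -/
noncomputable def tensorFunctor (R : Type) [Ring R] : AddCommGrpCat.{0} ⥤ AddCommGrpCat.{0} where
  obj M := AddCommGrpCat.of (TensorProduct ℤ R M)
  map f := AddCommGrpCat.ofHom
    (TensorProduct.map (LinearMap.id : R →ₗ[ℤ] R) f.hom.toIntLinearMap).toAddMonoidHom
  map_id X := by
    apply AddCommGrpCat.hom_ext
    rw [AddCommGrpCat.hom_ofHom, AddCommGrpCat.hom_id]
    rw [show AddMonoidHom.toIntLinearMap (AddMonoidHom.id X) = (LinearMap.id : _ →ₗ[ℤ] _) from rfl,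
      TensorProduct.map_id]
    rfl
  map_comp f g := by
    apply AddCommGrpCat.hom_ext
    simp only [AddCommGrpCat.hom_ofHom, AddCommGrpCat.hom_comp]
    rw [show AddMonoidHom.toIntLinearMap (g.hom.comp f.hom)
        = (AddMonoidHom.toIntLinearMap g.hom).comp (AddMonoidHom.toIntLinearMap f.hom) from rfl]
    rw [show (LinearMap.id : R →ₗ[ℤ] R)
        = (LinearMap.id : R →ₗ[ℤ] R).comp (LinearMap.id : R →ₗ[ℤ] R) from rfl]
    rw [TensorProduct.map_comp]
    rfl

/-!
Both hypothesis and conclusion are read through the characterization of `L`-equivalences as the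
maps inducing bijections `C(V, Z) → C(U, Z)` for all local `Z`. Maps `R ⊗ Y → Z` are linear
maps `R → Hom(Y, Z)`, and under this correspondence precomposition with `R ⊗ f` becomes
postcomposition with the additive bijection `f^* : Hom(Y, Z) → Hom(X, Z)`, which is bijective.
-/

open TensorProduct

namespace LocalizationData

variable {C : Type*} [Category C] (Λ : LocalizationData C)

lemma isLocal_obj (X : C) : Λ.IsLocal (Λ.L.obj X) := by
  rw [IsLocal, ← Λ.coincide]
  exact Λ.isIso X

noncomputable def homEquivOfIsLocal {Z : C} (hZ : Λ.IsLocal Z) (V : C) :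
    (Λ.L.obj V ⟶ Z) ≃ (V ⟶ Z) :=
  haveI : IsIso (Λ.l.app Z) := hZ
  haveI : IsIso (Λ.L.map (Λ.l.app V)) := Λ.isIso V
  { toFun := fun k => Λ.l.app V ≫ k
    invFun := fun h => Λ.L.map h ≫ inv (Λ.l.app Z)
    left_inv := fun k => by
      simp only [Functor.map_comp, Λ.coincide, Category.assoc]
      rw [← NatTrans.naturality_assoc]
      simp
    right_inv := fun h => by
      dsimp only
      rw [← NatTrans.naturality_assoc]
      simp }

lemma bijective_precomp_map_iff {U V Z : C} (g : U ⟶ V) (hZ : Λ.IsLocal Z) :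
    Function.Bijective (fun k : Λ.L.obj V ⟶ Z => Λ.L.map g ≫ k) ↔
      Function.Bijective (fun h : V ⟶ Z => g ≫ h) := by
  have hsquare : (fun k : Λ.L.obj V ⟶ Z => Λ.L.map g ≫ k) =
      (Λ.homEquivOfIsLocal hZ U).symm ∘ (fun h : V ⟶ Z => g ≫ h) ∘
        Λ.homEquivOfIsLocal hZ V := by
    funext k
    rw [Function.comp_apply, Function.comp_apply, Equiv.eq_symm_apply]
    exact (Λ.l.naturality_assoc g k).symm
  rw [hsquare, Equiv.comp_bijective, Equiv.bijective_comp]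

lemma isIso_of_bijective_precomp {A B : C} (φ : A ⟶ B)
    (hA : Function.Bijective (fun x : B ⟶ A => φ ≫ x))
    (hB : Function.Bijective (fun x : B ⟶ B => φ ≫ x)) : IsIso φ := by
  obtain ⟨ψ, hψ : φ ≫ ψ = 𝟙 A⟩ := hA.2 (𝟙 A)
  refine ⟨ψ, hψ, hB.1 ?_⟩
  simp only [Category.comp_id, ← Category.assoc, hψ, Category.id_comp]

lemma isEquiv_iff_bijective_precomp {U V : C} (g : U ⟶ V) :
    Λ.IsEquiv g ↔ ∀ Z, Λ.IsLocal Z → Function.Bijective (fun h : V ⟶ Z => g ≫ h) := by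
  refine ⟨fun hg Z hZ => ?_, fun hg => ?_⟩
  · rw [← Λ.bijective_precomp_map_iff g hZ]
    exact (isIso_iff_coyoneda_map_bijective _).1 hg Z
  · apply isIso_of_bijective_precomp
    all_goals
      rw [Λ.bijective_precomp_map_iff g (Λ.isLocal_obj _)]
      exact hg _ (Λ.isLocal_obj _)

end LocalizationData

lemma TensorProduct.bijective_comp_lTensor {S M N N' P : Type*} [CommSemiring S]
    [AddCommMonoid M] [AddCommMonoid N] [AddCommMonoid N'] [AddCommMonoid P]
    [Module S M] [Module S N] [Module S N'] [Module S P] (f : N →ₗ[S] N')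
    (hf : Function.Bijective (fun h : N' →ₗ[S] P => h ∘ₗ f)) :
    Function.Bijective (fun h : M ⊗[S] N' →ₗ[S] P => h ∘ₗ f.lTensor M) := by
  let e := LinearEquiv.ofBijective (LinearMap.lcomp S P f) hf
  have hcurry : (fun h : M ⊗[S] N' →ₗ[S] P => h ∘ₗ f.lTensor M) =
      lift.equiv (RingHom.id S) M N P ∘ LinearEquiv.congrRight e ∘
        (lift.equiv (RingHom.id S) M N' P).symm := by
    funext h
    ext m n
    rfl
  rw [hcurry, EquivLike.comp_bijective, EquivLike.bijective_comp]
  exact (LinearEquiv.congrRight e).bijective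

lemma AddCommGrpCat.bijective_precomp_iff {X Y Z : AddCommGrpCat} (f : X ⟶ Y) :
    Function.Bijective (fun h : Y ⟶ Z => f ≫ h) ↔
      Function.Bijective (fun h : Y →ₗ[ℤ] Z => h ∘ₗ f.hom.toIntLinearMap) := by
  let e : ∀ A : AddCommGrpCat, (A ⟶ Z) ≃ (A →ₗ[ℤ] Z) := fun A =>
    ConcreteCategory.homEquiv.trans (addMonoidHomLequivInt ℤ).toEquiv
  have hcoe : (fun h : Y ⟶ Z => f ≫ h) =
      (e X).symm ∘ (fun h : Y →ₗ[ℤ] Z => h ∘ₗ f.hom.toIntLinearMap) ∘ e Y := rfl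
  rw [hcoe, Equiv.comp_bijective, Equiv.bijective_comp]

/-- For every ring `R` and every localization `L` on the category of abelian
groups, the endofunctor `R ⊗_ℤ –` preserves `L`-equivalences. -/
theorem tensor_preserves_localization_equivalences
    (R : Type) [Ring R] (Λ : LocalizationData AddCommGrpCat.{0})
    ⦃X Y : AddCommGrpCat.{0}⦄ (f : X ⟶ Y) (hf : Λ.IsEquiv f) :
    Λ.IsEquiv ((tensorFunctor R).map f) := by
  rw [Λ.isEquiv_iff_bijective_precomp] at hf ⊢
  intro Z hZ
  have hfZ := hf Z hZ
  rw [AddCommGrpCat.bijective_precomp_iff] at hfZ ⊢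
  exact bijective_comp_lTensor (M := R) _ hfZ
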